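/- arXiv:2602.00101 — 10 statements merged into one kernel-verified Lean document; each statement's English description precedes it below -/
import Mathlib

section
/- If φ < 1, then a fee-adjusted constant-product swap strictly increases the product of reserves: for x > 0 and r0, r1 > 0, letting y = x·φ·r1/(r0 + φ·x), we have (r0 + x)·(r1 − y) > r0·r1. -/
theorem stmt3 (φ x r0 r1 : ℝ) (hφ0 : 0 < φ) (hφ1 : φ < 1)
    (hx : 0 < x) (hr0 : 0 < r0) (hr1 : 0 < r1) :
    (r0 + x) * (r1 - x * (φ * r1 / (r0 + φ * x))) > r0 * r1 := by
  have hd : 0 < r0 + φ * x := by positivity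
  rw [gt_iff_lt, ← sub_pos]
  have : (r0 + x) * (r1 - x * (φ * r1 / (r0 + φ * x))) - r0 * r1
      = x * r1 * (r0 * (1 - φ) ) / (r0 + φ * x) := by
    field_simp; ring
  have h1 : 0 < 1 - φ := by linarith
  rw [this]
  positivity
end

section
/- The fee-adjusted constant-product swap rate satisfies the generalized additivity identity: for x, y > 0 and r0, r1 > 0, SX(x+y, r0, r1) = ((α·x + β·y)/(x+y)) · Z, where α = SX(x, r0, r1), β = SX(y, r0+x, r1−α·x), and Z = [((φ·r1·x)(r0 + φ·x + φ·y) + φ·r1·r0·y)·(r0 + x + φ·y)] / [(r0 + φ·x + φ·y)·((φ·r1·x)(r0 + x + φ·y) + φ·r1·r0·y)]. -/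
/-!
After the first swap the output reserve is `r1 - α x = r0 r1 / (r0 + φ x)`, so the two swaps
together pay out `α x + β y = φ r1 N / ((r0 + φ x) (r0 + x + φ y))` with
`N = x (r0 + x + φ y) + r0 y`. The numerator of `Z` factors through
`x (r0 + φ x + φ y) + r0 y = (x + y) (r0 + φ x)`, and its denominator contains `φ r1 N`;
after these substitutions everything but `φ r1 / (r0 + φ x + φ y)` cancels.
-/

variable {K : Type*} [Field K]

/-- The paper's `SX(x, r0, r1)`. -/
def swapRate (φ x r0 r1 : K) : K := φ * r1 / (r0 + φ * x)

lemma sub_swapRate_mul {φ x r0 : K} (r1 : K) (h : r0 + φ * x ≠ 0) :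
    r1 - swapRate φ x r0 r1 * x = r0 * r1 / (r0 + φ * x) := by
  unfold swapRate
  field_simp
  ring

lemma swapRate_mul_add_swapRate_mul {φ x y r0 : K} (r1 : K)
    (hx : r0 + φ * x ≠ 0) (hy : r0 + x + φ * y ≠ 0) :
    swapRate φ x r0 r1 * x + swapRate φ y (r0 + x) (r1 - swapRate φ x r0 r1 * x) * y =
      φ * r1 * (x * (r0 + x + φ * y) + r0 * y) / ((r0 + φ * x) * (r0 + x + φ * y)) := by
  rw [sub_swapRate_mul r1 hx]
  unfold swapRate
  field_simp

theorem swapRate_add_eq {φ x y r0 r1 : K} (hφ : φ ≠ 0) (hr1 : r1 ≠ 0)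
    (hx : r0 + φ * x ≠ 0) (hy : r0 + x + φ * y ≠ 0) (hxy : r0 + φ * x + φ * y ≠ 0)
    (hsum : x + y ≠ 0) (hN : x * (r0 + x + φ * y) + r0 * y ≠ 0) :
    let α := swapRate φ x r0 r1
    let β := swapRate φ y (r0 + x) (r1 - α * x)
    let Z := ((φ * r1 * x) * (r0 + φ * x + φ * y) + φ * r1 * r0 * y) * (r0 + x + φ * y) /
      ((r0 + φ * x + φ * y) * ((φ * r1 * x) * (r0 + x + φ * y) + φ * r1 * r0 * y))
    swapRate φ (x + y) r0 r1 = ((α * x + β * y) / (x + y)) * Z := by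
  intro α β Z
  have hZnum : (φ * r1 * x) * (r0 + φ * x + φ * y) + φ * r1 * r0 * y =
      φ * r1 * ((x + y) * (r0 + φ * x)) := by ring
  have hZden : (φ * r1 * x) * (r0 + x + φ * y) + φ * r1 * r0 * y =
      φ * r1 * (x * (r0 + x + φ * y) + r0 * y) := by ring
  simp only [α, β, Z, swapRate_mul_add_swapRate_mul r1 hx hy, hZnum, hZden]
  unfold swapRate
  rw [mul_add φ x y, ← add_assoc]
  field_simp

theorem stmt5_general (φ x y r0 r1 : ℝ) (hφ0 : 0 < φ)
    (hx : 0 < x) (hy : 0 < y) (hr0 : 0 < r0) (hr1 : 0 < r1) :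
    let α := φ * r1 / (r0 + φ * x)
    let β := φ * (r1 - α * x) / ((r0 + x) + φ * y)
    let Z := ((φ * r1 * x) * (r0 + φ * x + φ * y) + φ * r1 * r0 * y) * (r0 + x + φ * y) /
      ((r0 + φ * x + φ * y) * ((φ * r1 * x) * (r0 + x + φ * y) + φ * r1 * r0 * y))
    φ * r1 / (r0 + φ * (x + y)) = ((α * x + β * y) / (x + y)) * Z :=
  swapRate_add_eq hφ0.ne' hr1.ne' (by positivity) (by positivity) (by positivity)
    (by positivity) (by positivity)

theorem stmt5 (φ x y r0 r1 : ℝ) (hφ0 : 0 < φ) (hφ1 : φ ≤ 1)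
    (hx : 0 < x) (hy : 0 < y) (hr0 : 0 < r0) (hr1 : 0 < r1) :
    let α := φ * r1 / (r0 + φ * x)
    let β := φ * (r1 - α * x) / ((r0 + x) + φ * y)
    let Z := ((φ * r1 * x) * (r0 + φ * x + φ * y) + φ * r1 * r0 * y) * (r0 + x + φ * y) /
      ((r0 + φ * x + φ * y) * ((φ * r1 * x) * (r0 + x + φ * y) + φ * r1 * r0 * y))
    φ * r1 / (r0 + φ * (x + y)) = ((α * x + β * y) / (x + y)) * Z :=
  stmt5_general φ x y r0 r1 hφ0 hx hy hr0 hr1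
end

section
/- If φ < 1, the correction factor Z in the generalized additivity formula is strictly greater than 1: for x, y > 0 and r0, r1 > 0, [((φ·r1·x)(r0 + φ·x + φ·y) + φ·r1·r0·y)·(r0 + x + φ·y)] / [(r0 + φ·x + φ·y)·((φ·r1·x)(r0 + x + φ·y) + φ·r1·r0·y)] > 1. -/
theorem stmt7 (φ x y r0 r1 : ℝ) (hφ0 : 0 < φ) (hφ1 : φ < 1)
    (hx : 0 < x) (hy : 0 < y) (hr0 : 0 < r0) (hr1 : 0 < r1) :
    ((φ * r1 * x) * (r0 + φ * x + φ * y) + φ * r1 * r0 * y) * (r0 + x + φ * y) /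
      ((r0 + φ * x + φ * y) * ((φ * r1 * x) * (r0 + x + φ * y) + φ * r1 * r0 * y)) > 1 := by
  rw [gt_iff_lt, lt_div_iff₀ (by positivity)]
  nlinarith [mul_pos (mul_pos (mul_pos (mul_pos hφ0 hr1) hr0) hy) (mul_pos (sub_pos.mpr hφ1) hx)]
end

section
/- The equilibrium swap value brings the AMM to equilibrium: let p0, p1 > 0 be external token prices, r0, r1 > 0 reserves, φ ∈ (0,1), and define x0 = (−√p0·r0·(1+φ) + √r0·√(p0·r0·(1−φ)² + 4·p1·r1·φ²)) / (2·√p0·φ). If x0 > 0 then, after swapping x0 (updating reserves to r0' = r0 + x0 and r1' = r1 − x0·φ·r1/(r0 + φ·x0)), the internal exchange rate φ·r1'/r0' equals the external exchange rate p0/p1. -/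
theorem stmt11 (φ r0 r1 p0 p1 : ℝ) (hφ0 : 0 < φ) (hφ1 : φ < 1)
    (hr0 : 0 < r0) (hr1 : 0 < r1) (hp0 : 0 < p0) (hp1 : 0 < p1)
    (x0 : ℝ)
    (hx0 : x0 = (-(Real.sqrt p0) * r0 * (1 + φ) +
      Real.sqrt r0 * Real.sqrt (p0 * r0 * (1 - φ)^2 + 4 * p1 * r1 * φ^2)) /
      (2 * Real.sqrt p0 * φ))
    (hpos : 0 < x0) :
    φ * (r1 - x0 * (φ * r1 / (r0 + φ * x0))) / (r0 + x0) = p0 / p1 := by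
  set s := Real.sqrt p0 with hs
  set t := Real.sqrt r0 with ht
  set d := Real.sqrt (p0 * r0 * (1 - φ)^2 + 4 * p1 * r1 * φ^2) with hd
  have hs2 : s ^ 2 = p0 := Real.sq_sqrt hp0.le
  have ht2 : t ^ 2 = r0 := Real.sq_sqrt hr0.le
  have hDpos : 0 ≤ p0 * r0 * (1 - φ)^2 + 4 * p1 * r1 * φ^2 := by positivity
  have hd2 : d ^ 2 = p0 * r0 * (1 - φ)^2 + 4 * p1 * r1 * φ^2 := Real.sq_sqrt hDpos
  have hspos : 0 < s := Real.sqrt_pos.mpr hp0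
  have h1 : 2 * s * φ * x0 = -s * r0 * (1 + φ) + t * d := by
    rw [hx0]; field_simp
  have h2 : t ^ 2 * d ^ 2 = (2 * s * φ * x0 + s * r0 * (1 + φ)) ^ 2 := by
    rw [show 2 * s * φ * x0 + s * r0 * (1 + φ) = t * d by linarith]; ring
  rw [ht2, hd2] at h2
  have h3 : r0 * (p0 * r0 * (1 - φ) ^ 2 + 4 * p1 * r1 * φ ^ 2) =
      p0 * (2 * φ * x0 + r0 * (1 + φ)) ^ 2 := by
    linear_combination h2 + (2 * φ * x0 + r0 * (1 + φ)) ^ 2 * hs2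
  have key : p0 * ((r0 + φ * x0) * (r0 + x0)) = p1 * φ * r1 * r0 := by
    have h4 : (4 * φ) * (p0 * ((r0 + φ * x0) * (r0 + x0))) =
        (4 * φ) * (p1 * φ * r1 * r0) := by linear_combination -h3
    exact mul_left_cancel₀ (by positivity) h4
  have hA : 0 < r0 + φ * x0 := by positivity
  have hB : 0 < r0 + x0 := by positivity
  field_simp
  nlinarith [key]
end

section
/- The equilibrium swap value is unique: if x0, x1 > 0 are both such that swapping them from reserves r0, r1 > 0 brings the internal exchange rate φ·(r1 − x·SX(x,r0,r1))/(r0 + x) to equal the external rate p0/p1, then x0 = x1. -/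
theorem stmt12 (φ r0 r1 p0 p1 x0 x1 : ℝ) (hφ0 : 0 < φ) (hφ1 : φ < 1)
    (hr0 : 0 < r0) (hr1 : 0 < r1) (hp0 : 0 < p0) (hp1 : 0 < p1)
    (hx0 : 0 < x0) (hx1 : 0 < x1)
    (h0 : φ * (r1 - x0 * (φ * r1 / (r0 + φ * x0))) / (r0 + x0) = p0 / p1)
    (h1 : φ * (r1 - x1 * (φ * r1 / (r0 + φ * x1))) / (r0 + x1) = p0 / p1) :
    x0 = x1 := by
  have d0 : (0:ℝ) < r0 + φ * x0 := by positivity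
  have d1 : (0:ℝ) < r0 + φ * x1 := by positivity
  have e0 : (0:ℝ) < r0 + x0 := by positivity
  have e1 : (0:ℝ) < r0 + x1 := by positivity
  have h := h0.trans h1.symm
  field_simp at h
  have c : (0:ℝ) < φ * r1 * r0 := by positivity
  have key : (x1 - x0) * (r0 * (1 + φ) + φ * (x0 + x1)) = 0 := by
    have := mul_left_cancel₀ (ne_of_gt c) (by nlinarith [h] : φ * r1 * r0 * ((r0 + φ * x1) * (r0 + x1)) = φ * r1 * r0 * ((r0 + φ * x0) * (r0 + x0)))
    nlinarith [this]
  have pos : (0:ℝ) < r0 * (1 + φ) + φ * (x0 + x1) := by positivity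
  have := mul_eq_zero.mp key
  rcases this with h' | h'
  · linarith
  · linarith
end

section
/- The internal exchange rate after a swap is strictly decreasing in the swap amount: for a fee-adjusted constant-product AMM with φ ∈ (0,1] and reserves r0, r1 > 0, the function x ↦ φ·(r1 − x·φ·r1/(r0 + φ·x))/(r0 + x) is strictly decreasing on x ≥ 0. -/
theorem stmt13 (φ r0 r1 : ℝ) (hφ0 : 0 < φ) (hφ1 : φ ≤ 1)
    (hr0 : 0 < r0) (hr1 : 0 < r1) :
    StrictAntiOn (fun x : ℝ => φ * (r1 - x * (φ * r1 / (r0 + φ * x))) / (r0 + x))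
      (Set.Ici 0) := by
  have key : ∀ x : ℝ, 0 ≤ x →
      φ * (r1 - x * (φ * r1 / (r0 + φ * x))) / (r0 + x)
        = φ * r0 * r1 / ((r0 + φ * x) * (r0 + x)) := by
    intro x hx
    have h1 : (0:ℝ) < r0 + φ * x := by positivity
    have h2 : (0:ℝ) < r0 + x := by positivity
    field_simp
    ring
  intro a ha b hb hab
  simp only [Set.mem_Ici] at ha hb
  simp only
  rw [key a ha, key b hb]
  have ha1 : (0:ℝ) < r0 + φ * a := by positivity
  have ha2 : (0:ℝ) < r0 + a := by positivity
  have hb1 : (0:ℝ) < r0 + φ * b := by positivity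
  apply div_lt_div_of_pos_left (by positivity) (by positivity)
  have : r0 + φ * a < r0 + φ * b := by nlinarith
  exact mul_lt_mul this (by linarith) ha2 hb1.le
end

section
/- Define the trader's gain from a swap of x as G(x) = p1·x·SX(x, r0, r1) − p0·x, where SX(x, r0, r1) = φ·r1/(r0 + φ·x). Let x0 > 0 be the equilibrium swap value. If φ < 1, then for all x with 0 < x < x0, G(x0) > G(x). -/
/-!
Squaring the closed form shows that `x₀` satisfies the equilibrium identity
`p₀ (r₀ + φ x₀)(r₀ + x₀) = p₁ φ r₁ r₀`. Over a common denominator,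
`G(x₀) - G(x) = (x₀ - x) (p₁ φ r₁ r₀ - p₀ (r₀ + φ x₀)(r₀ + φ x)) / ((r₀ + φ x₀)(r₀ + φ x))`,
and for `0 < x < x₀` and `φ ≤ 1` we have `r₀ + φ x < r₀ + x₀`, so the equilibrium identity makes
the second factor of the numerator positive.
-/

namespace FeeAMM

variable {φ r0 r1 p0 p1 : ℝ}

noncomputable def gain (φ r0 r1 p0 p1 x : ℝ) : ℝ :=
  p1 * x * (φ * r1 / (r0 + φ * x)) - p0 * x

theorem equilibrium_identity {x0 : ℝ} (hφ : 0 < φ) (hr0 : 0 < r0) (hp0 : 0 < p0)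
    (hdisc : 0 ≤ p0 * r0 * (1 - φ) ^ 2 + 4 * p1 * r1 * φ ^ 2)
    (hx0 : x0 = (-(Real.sqrt p0) * r0 * (1 + φ) +
      Real.sqrt r0 * Real.sqrt (p0 * r0 * (1 - φ) ^ 2 + 4 * p1 * r1 * φ ^ 2)) /
      (2 * Real.sqrt p0 * φ)) :
    p0 * ((r0 + φ * x0) * (r0 + x0)) = p1 * φ * r1 * r0 := by
  have hsp0 : 0 < Real.sqrt p0 := Real.sqrt_pos.mpr hp0
  have hroot : 2 * Real.sqrt p0 * φ * x0 + Real.sqrt p0 * r0 * (1 + φ)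
      = Real.sqrt r0 * Real.sqrt (p0 * r0 * (1 - φ) ^ 2 + 4 * p1 * r1 * φ ^ 2) := by
    rw [hx0]
    field_simp
    ring
  have hsq := congrArg (· ^ 2) hroot
  simp only [mul_pow, Real.sq_sqrt hr0.le, Real.sq_sqrt hdisc] at hsq
  have hfour : (4 * φ) * (p0 * ((r0 + φ * x0) * (r0 + x0))) = (4 * φ) * (p1 * φ * r1 * r0) := by
    linear_combination hsq - (2 * φ * x0 + r0 * (1 + φ)) ^ 2 * Real.sq_sqrt hp0.le
  exact mul_left_cancel₀ (by positivity) hfour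

theorem gain_sub_gain {x y : ℝ} (hx : r0 + φ * x ≠ 0) (hy : r0 + φ * y ≠ 0) :
    gain φ r0 r1 p0 p1 y - gain φ r0 r1 p0 p1 x
      = (y - x) * (p1 * φ * r1 * r0 - p0 * ((r0 + φ * y) * (r0 + φ * x)))
        / ((r0 + φ * y) * (r0 + φ * x)) := by
  rw [gain, gain, mul_div_assoc', mul_div_assoc', div_sub' hy, div_sub' hx,
    div_sub_div _ _ hy hx, mul_comm (r0 + φ * y)]
  ring

theorem gain_lt_gain_of_equilibrium {x x0 : ℝ} (hφ0 : 0 ≤ φ) (hφ1 : φ ≤ 1) (hr0 : 0 < r0)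
    (hp0 : 0 < p0) (heq : p0 * ((r0 + φ * x0) * (r0 + x0)) = p1 * φ * r1 * r0)
    (hx : 0 < x) (hxx0 : x < x0) :
    gain φ r0 r1 p0 p1 x < gain φ r0 r1 p0 p1 x0 := by
  have hD0 : 0 < r0 + φ * x0 := by have := hx.trans hxx0; positivity
  have hDx : 0 < r0 + φ * x := by positivity
  have hlt : r0 + φ * x < r0 + x0 := by nlinarith
  have hnum : p0 * ((r0 + φ * x0) * (r0 + φ * x)) < p1 * φ * r1 * r0 := by
    rw [← heq]
    gcongr
  rw [← sub_pos, gain_sub_gain hDx.ne' hD0.ne']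
  exact div_pos (mul_pos (sub_pos.mpr hxx0) (sub_pos.mpr hnum)) (by positivity)

end FeeAMM

theorem stmt14_general (φ r0 r1 p0 p1 x0 : ℝ) (hφ0 : 0 < φ) (hφ1 : φ < 1)
    (hr0 : 0 < r0) (hr1 : 0 < r1) (hp0 : 0 < p0) (hp1 : 0 < p1)
    (hx0 : x0 = (-(Real.sqrt p0) * r0 * (1 + φ) +
      Real.sqrt r0 * Real.sqrt (p0 * r0 * (1 - φ)^2 + 4 * p1 * r1 * φ^2)) /
      (2 * Real.sqrt p0 * φ)) :
    ∀ x : ℝ, 0 < x → x < x0 →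
      p1 * x0 * (φ * r1 / (r0 + φ * x0)) - p0 * x0 >
      p1 * x * (φ * r1 / (r0 + φ * x)) - p0 * x := by
  intro x hx hxx0
  have heq := FeeAMM.equilibrium_identity hφ0 hr0 hp0 (by positivity) hx0
  exact FeeAMM.gain_lt_gain_of_equilibrium hφ0.le hφ1.le hr0 hp0 heq hx hxx0

theorem stmt14 (φ r0 r1 p0 p1 x0 : ℝ) (hφ0 : 0 < φ) (hφ1 : φ < 1)
    (hr0 : 0 < r0) (hr1 : 0 < r1) (hp0 : 0 < p0) (hp1 : 0 < p1)
    (hx0 : x0 = (-(Real.sqrt p0) * r0 * (1 + φ) +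
      Real.sqrt r0 * Real.sqrt (p0 * r0 * (1 - φ)^2 + 4 * p1 * r1 * φ^2)) /
      (2 * Real.sqrt p0 * φ))
    (hpos : 0 < x0) :
    ∀ x : ℝ, 0 < x → x < x0 →
      p1 * x0 * (φ * r1 / (r0 + φ * x0)) - p0 * x0 >
      p1 * x * (φ * r1 / (r0 + φ * x)) - p0 * x :=
  stmt14_general φ r0 r1 p0 p1 x0 hφ0 hφ1 hr0 hr1 hp0 hp1 hx0
end

section
/- Let x0 > 0 be the equilibrium swap value of a fee-adjusted constant-product AMM with φ < 1, and let G(x) = p1·x·φ·r1/(r0 + φ·x) − p0·x be the gain function. Then for all x > x0: G(x0) > G(x) if and only if x > x0/φ. -/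
/-! Since `x0` solves `p0 (r0 + φ x0) (r0 + x0) = p1 φ r1 r0`, the difference `G(x0) - G(x)` factors
as `p0 (x - x0) (φ x - x0) / (r0 + φ x)`, whose sign for `x > x0` is the sign of `φ x - x0`. -/

noncomputable def ammGain (φ r0 r1 p0 p1 x : ℝ) : ℝ :=
  p1 * x * (φ * r1 / (r0 + φ * x)) - p0 * x

/-- The closed form for `x0` is the quadratic-formula root of
`p0 * φ * x ^ 2 + p0 * r0 * (1 + φ) * x + r0 * (p0 * r0 - p1 * φ * r1)`, which factors as below. -/
theorem ammEquilibrium_root {φ r0 r1 p0 p1 x0 : ℝ} (hφ : 0 < φ) (hr0 : 0 ≤ r0) (hp0 : 0 < p0)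
    (hD : 0 ≤ p0 * r0 * (1 - φ)^2 + 4 * p1 * r1 * φ^2)
    (hx0 : x0 = (-(Real.sqrt p0) * r0 * (1 + φ) +
      Real.sqrt r0 * Real.sqrt (p0 * r0 * (1 - φ)^2 + 4 * p1 * r1 * φ^2)) /
      (2 * Real.sqrt p0 * φ)) :
    p0 * ((r0 + φ * x0) * (r0 + x0)) = p1 * φ * r1 * r0 := by
  set D := p0 * r0 * (1 - φ)^2 + 4 * p1 * r1 * φ^2
  have hs : 0 < Real.sqrt p0 := Real.sqrt_pos.2 hp0
  have hroot : Real.sqrt p0 * (2 * φ * x0 + r0 * (1 + φ)) = Real.sqrt r0 * Real.sqrt D := by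
    rw [hx0]; field_simp; ring
  have hsq : p0 * (2 * φ * x0 + r0 * (1 + φ)) ^ 2 = r0 * D :=
    calc p0 * (2 * φ * x0 + r0 * (1 + φ)) ^ 2
        = (Real.sqrt p0 * (2 * φ * x0 + r0 * (1 + φ))) ^ 2 := by rw [mul_pow, Real.sq_sqrt hp0.le]
      _ = (Real.sqrt r0 * Real.sqrt D) ^ 2 := by rw [hroot]
      _ = r0 * D := by rw [mul_pow, Real.sq_sqrt hr0, Real.sq_sqrt hD]
  have : 4 * φ * (p0 * ((r0 + φ * x0) * (r0 + x0))) = 4 * φ * (p1 * φ * r1 * r0) := by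
    linear_combination hsq
  exact mul_left_cancel₀ (by positivity) this

theorem ammGain_sub_ammGain {φ r0 r1 p0 p1 x0 x : ℝ}
    (hx0 : p0 * ((r0 + φ * x0) * (r0 + x0)) = p1 * φ * r1 * r0)
    (h0 : r0 + φ * x0 ≠ 0) (h : r0 + φ * x ≠ 0) :
    ammGain φ r0 r1 p0 p1 x0 - ammGain φ r0 r1 p0 p1 x =
      (x - x0) * p0 * (φ * x - x0) / (r0 + φ * x) := by
  unfold ammGain
  rw [mul_div_assoc', mul_div_assoc', div_sub' h0, div_sub' h, div_sub_div _ _ h0 h,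
    div_eq_div_iff (mul_ne_zero h0 h) h]
  linear_combination (x - x0) * (r0 + φ * x) * hx0

theorem stmt15_general (φ r0 r1 p0 p1 x0 : ℝ) (hφ0 : 0 < φ)
    (hr0 : 0 < r0) (hr1 : 0 < r1) (hp0 : 0 < p0) (hp1 : 0 < p1)
    (hx0 : x0 = (-(Real.sqrt p0) * r0 * (1 + φ) +
      Real.sqrt r0 * Real.sqrt (p0 * r0 * (1 - φ)^2 + 4 * p1 * r1 * φ^2)) /
      (2 * Real.sqrt p0 * φ))
    (hpos : 0 < x0) :
    ∀ x : ℝ, x > x0 →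
      (p1 * x0 * (φ * r1 / (r0 + φ * x0)) - p0 * x0 >
        p1 * x * (φ * r1 / (r0 + φ * x)) - p0 * x ↔ x > x0 / φ) := by
  intro x hx
  have hequil := ammEquilibrium_root hφ0 hr0.le hp0 (by positivity) hx0
  have hden : 0 < r0 + φ * x := by have := hpos.trans hx; positivity
  change ammGain φ r0 r1 p0 p1 x < ammGain φ r0 r1 p0 p1 x0 ↔ x0 / φ < x
  rw [← sub_pos, ammGain_sub_ammGain hequil (by positivity) hden.ne', div_pos_iff_of_pos_right hden,
    mul_pos_iff_of_pos_left (mul_pos (sub_pos.2 hx) hp0), sub_pos, div_lt_iff₀' hφ0]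

theorem stmt15 (φ r0 r1 p0 p1 x0 : ℝ) (hφ0 : 0 < φ) (hφ1 : φ < 1)
    (hr0 : 0 < r0) (hr1 : 0 < r1) (hp0 : 0 < p0) (hp1 : 0 < p1)
    (hx0 : x0 = (-(Real.sqrt p0) * r0 * (1 + φ) +
      Real.sqrt r0 * Real.sqrt (p0 * r0 * (1 - φ)^2 + 4 * p1 * r1 * φ^2)) /
      (2 * Real.sqrt p0 * φ))
    (hpos : 0 < x0) :
    ∀ x : ℝ, x > x0 →
      (p1 * x0 * (φ * r1 / (r0 + φ * x0)) - p0 * x0 >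
        p1 * x * (φ * r1 / (r0 + φ * x)) - p0 * x ↔ x > x0 / φ) :=
  stmt15_general φ r0 r1 p0 p1 x0 hφ0 hr0 hr1 hp0 hp1 hx0 hpos
end

section
/- The gain function G(x) = p1·x·φ·r1/(r0 + φ·x) − p0·x on x > 0 attains its unique global maximum at x_max = (√(p1·φ·r0·r1) − √p0·r0)/(√p0·φ), provided x_max > 0: for all x > 0 with x ≠ x_max, G(x_max) > G(x). -/
/-!
With `s = r0 + φ x` the gain is `p1 r1 + p0 r0 / φ - (p1 r0 r1 / s + (p0 / φ) s)`, so maximizing it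
amounts to minimizing `a / s + b s` over `s > 0`. That sum exceeds its value at `t = √(a / b)` by
`b (s - t)² / s`, and `t` is exactly `r0 + φ x_max`.
-/

lemma div_add_mul_lt_of_mul_sq_eq {a b s t : ℝ} (hb : 0 < b) (hs : 0 < s)
    (hbt : b * t ^ 2 = a) (hst : s ≠ t) : a / t + b * t < a / s + b * s := by
  have key : a / s + b * s - (a / t + b * t) = b * (s - t) ^ 2 / s := by
    subst hbt
    field_simp
    ring
  have hgap : 0 < b * (s - t) ^ 2 / s := by
    have := sub_ne_zero_of_ne hst
    positivity
  linarith

lemma swap_gain_eq {φ r0 r1 p0 p1 x : ℝ} (hφ : φ ≠ 0) (hs : r0 + φ * x ≠ 0) :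
    p1 * x * (φ * r1 / (r0 + φ * x)) - p0 * x =
      p1 * r1 + p0 * r0 / φ - (p1 * r0 * r1 / (r0 + φ * x) + p0 / φ * (r0 + φ * x)) := by
  rw [mul_comm φ x] at hs ⊢
  field_simp
  ring

theorem stmt16_general (φ r0 r1 p0 p1 : ℝ) (hφ0 : 0 < φ)
    (hr0 : 0 < r0) (hr1 : 0 < r1) (hp0 : 0 < p0) (hp1 : 0 < p1)
    (xmax : ℝ)
    (hxmax : xmax = (Real.sqrt (p1 * φ * r0 * r1) - Real.sqrt p0 * r0) / (Real.sqrt p0 * φ))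
    (hpos : 0 < xmax) :
    ∀ x : ℝ, 0 < x → x ≠ xmax →
      p1 * xmax * (φ * r1 / (r0 + φ * xmax)) - p0 * xmax >
      p1 * x * (φ * r1 / (r0 + φ * x)) - p0 * x := by
  intro x hx hne
  have hs : 0 < r0 + φ * x := by positivity
  have ht : 0 < r0 + φ * xmax := by positivity
  have hopt : p0 / φ * (r0 + φ * xmax) ^ 2 = p1 * r0 * r1 := by
    have hsqrt : 0 < Real.sqrt p0 := Real.sqrt_pos.mpr hp0
    have hroot : r0 + φ * xmax = Real.sqrt (p1 * φ * r0 * r1) / Real.sqrt p0 := by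
      rw [hxmax]
      field_simp
      ring
    rw [hroot, div_pow, Real.sq_sqrt (by positivity), Real.sq_sqrt hp0.le]
    field_simp
  have hst : r0 + φ * x ≠ r0 + φ * xmax := fun h =>
    hne (mul_left_cancel₀ hφ0.ne' (add_left_cancel h))
  rw [swap_gain_eq hφ0.ne' hs.ne', swap_gain_eq hφ0.ne' ht.ne', gt_iff_lt, sub_lt_sub_iff_left]
  exact div_add_mul_lt_of_mul_sq_eq (by positivity) hs hopt hst

theorem stmt16 (φ r0 r1 p0 p1 : ℝ) (hφ0 : 0 < φ) (hφ1 : φ < 1)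
    (hr0 : 0 < r0) (hr1 : 0 < r1) (hp0 : 0 < p0) (hp1 : 0 < p1)
    (xmax : ℝ)
    (hxmax : xmax = (Real.sqrt (p1 * φ * r0 * r1) - Real.sqrt p0 * r0) / (Real.sqrt p0 * φ))
    (hpos : 0 < xmax) :
    ∀ x : ℝ, 0 < x → x ≠ xmax →
      p1 * xmax * (φ * r1 / (r0 + φ * xmax)) - p0 * xmax >
      p1 * x * (φ * r1 / (r0 + φ * x)) - p0 * x :=
  stmt16_general φ r0 r1 p0 p1 hφ0 hr0 hr1 hp0 hp1 xmax hxmax hpos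
end

section
/- The gain-maximizing swap value satisfies x0 < x_max ≤ x0/φ, where x0 is the equilibrium swap value and x_max = (√(p1·φ·r0·r1) − √p0·r0)/(√p0·φ), provided φ < 1, x0 > 0 and x_max > 0. -/
theorem stmt18 (φ r0 r1 p0 p1 x0 xmax : ℝ) (hφ0 : 0 < φ) (hφ1 : φ < 1)
    (hr0 : 0 < r0) (hr1 : 0 < r1) (hp0 : 0 < p0) (hp1 : 0 < p1)
    (hx0 : x0 = (-(Real.sqrt p0) * r0 * (1 + φ) +
      Real.sqrt r0 * Real.sqrt (p0 * r0 * (1 - φ)^2 + 4 * p1 * r1 * φ^2)) /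
      (2 * Real.sqrt p0 * φ))
    (hxmax : xmax = (Real.sqrt (p1 * φ * r0 * r1) - Real.sqrt p0 * r0) / (Real.sqrt p0 * φ))
    (hx0pos : 0 < x0) (hxmaxpos : 0 < xmax) :
    x0 < xmax ∧ xmax ≤ x0 / φ := by
  set s := Real.sqrt p0 with hs_def
  set t := Real.sqrt (p1 * φ * r0 * r1) with ht_def
  set D := Real.sqrt r0 * Real.sqrt (p0 * r0 * (1 - φ)^2 + 4 * p1 * r1 * φ^2) with hD_def
  have hs : 0 < s := Real.sqrt_pos.mpr hp0
  have hs2 : s ^ 2 = p0 := Real.sq_sqrt hp0.le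
  have ht0 : 0 ≤ t := Real.sqrt_nonneg _
  have ht2 : t ^ 2 = p1 * φ * r0 * r1 := Real.sq_sqrt (by positivity)
  have hD0 : 0 ≤ D := mul_nonneg (Real.sqrt_nonneg _) (Real.sqrt_nonneg _)
  have hD2 : D ^ 2 = r0 * (p0 * r0 * (1 - φ)^2 + 4 * p1 * r1 * φ^2) := by
    rw [hD_def, mul_pow, Real.sq_sqrt hr0.le, Real.sq_sqrt (by positivity)]
  clear_value s t D
  have hsφ : 0 < s * φ := mul_pos hs hφ0
  -- from xmax > 0 : t > s * r0
  have htgt : s * r0 < t := by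
    have h1 : t - s * r0 = xmax * (s * φ) := by
      rw [hxmax]; field_simp
    nlinarith [mul_pos hxmaxpos hsφ]
  -- key inequalities
  have hk1 : p0 * r0 < p1 * φ * r1 := by
    have h := mul_self_lt_mul_self (by positivity : (0:ℝ) ≤ s * r0) htgt
    have e1 : (s * r0) * (s * r0) = p0 * (r0 * r0) := by
      linear_combination (r0 * r0) * hs2
    have e2 : t * t = p1 * φ * r0 * r1 := by linear_combination ht2
    rw [e1, e2] at h
    nlinarith [h, hr0]
  have hk2 : s * t < p1 * φ * r1 := by
    nlinarith [mul_nonneg hs.le ht0, mul_pos (mul_pos hp1 hφ0) hr1]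
  have hkey : 0 < r0 * (1 - φ) * (p1 * φ * r1 - s * t) :=
    mul_pos (mul_pos hr0 (sub_pos.mpr hφ1)) (sub_pos.mpr hk2)
  -- D < 2*t - s*r0*(1-φ)
  have hub : D < 2 * t - s * r0 * (1 - φ) := by
    have hR : 0 < 2 * t - s * r0 * (1 - φ) := by
      nlinarith [mul_pos hs hr0]
    have hsq : (2 * t - s * r0 * (1 - φ))^2 - D^2
        = 4 * (r0 * (1 - φ) * (p1 * φ * r1 - s * t)) := by
      linear_combination (-(1:ℝ)) * hD2 + 4 * ht2 + (r0^2 * (1 - φ)^2) * hs2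
    exact lt_of_pow_lt_pow_left₀ 2 hR.le (by linarith)
  -- D ≥ 2*φ*t + s*r0*(1-φ)
  have hlb : 2 * φ * t + s * r0 * (1 - φ) ≤ D := by
    have hsq : D^2 - (2 * φ * t + s * r0 * (1 - φ))^2
        = 4 * (φ * (r0 * (1 - φ) * (p1 * φ * r1 - s * t))) := by
      linear_combination hD2 - 4 * φ^2 * ht2 - (r0^2 * (1 - φ)^2) * hs2
    have hpos : 0 < φ * (r0 * (1 - φ) * (p1 * φ * r1 - s * t)) := mul_pos hφ0 hkey
    refine le_of_pow_le_pow_left₀ two_ne_zero hD0 ?_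
    linarith
  constructor
  · rw [hx0, hxmax, div_lt_div_iff₀ (by positivity) hsφ]
    have h2 : (t - s * r0) * (2 * s * φ) - (-s * r0 * (1 + φ) + D) * (s * φ)
        = (s * φ) * ((2 * t - s * r0 * (1 - φ)) - D) := by ring
    linarith [mul_pos hsφ (sub_pos.mpr hub)]
  · rw [hx0, hxmax, div_div, div_le_div_iff₀ hsφ (by positivity)]
    have h2 : (-s * r0 * (1 + φ) + D) * (s * φ) - (t - s * r0) * (2 * s * φ * φ)
        = (s * φ) * (D - (2 * φ * t + s * r0 * (1 - φ))) := by ring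
    linarith [mul_nonneg hsφ.le (sub_nonneg.mpr hlb)]
end
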